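/- Let A be the GFDM matrix whose phase-shifted characteristic matrix Ḡ satisfies Ḡ_{k,l} = 1 for 0 ≤ l < ⌈M/2⌉ and Ḡ_{k,l} = e^{-2πi k/K} for ⌈M/2⌉ ≤ l < M (all 0 ≤ k < K). Then A is unitary. (This is the GFDM matrix of the Dirichlet pulse, whose D-point DFT g_f satisfies (g_f)_l = sqrt(K) for l ∈ {0,...,⌈(M-1)/2⌉-1+1} ∪ {D-⌈(M-1)/2⌉,...,D-1} appropriately and 0 otherwise.) -/

import Mathlib

open Complex Matrix BigOperators Kronecker

noncomputable section

namespace GFDM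

/-- Normalized p-point DFT matrix. -/
def W (p : ℕ) : Matrix (Fin p) (Fin p) ℂ := fun m n =>
  Complex.exp (-2 * Real.pi * Complex.I * (m.val : ℂ) * (n.val : ℂ) / (p : ℂ)) / (Real.sqrt p : ℂ)

/-- Reshape a vector of length K*M into a K×M matrix, (k,m)-entry = g (k + m*K). -/
def reshape (K M : ℕ) (g : Fin (K * M) → ℂ) : Matrix (Fin K) (Fin M) ℂ := fun k m =>
  g ⟨k.val + m.val * K, by
    have hm := m.isLt
    calc k.val + m.val * K < K + m.val * K := by omega
      _ = (m.val + 1) * K := by ring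
      _ ≤ M * K := Nat.mul_le_mul_right K hm
      _ = K * M := Nat.mul_comm M K⟩

/-- Column-wise vectorization of a K×M matrix: (vec G) (k + m*K) = G k m. -/
def vec (K M : ℕ) (G : Matrix (Fin K) (Fin M) ℂ) : Fin (K * M) → ℂ := fun i =>
  G ⟨i.val % K, by
      have h := i.isLt
      rcases Nat.eq_zero_or_pos K with h0 | h0
      · subst h0; simp at h
      · exact Nat.mod_lt _ h0⟩
    ⟨i.val / K, Nat.div_lt_of_lt_mul i.isLt⟩

/-- The characteristic matrix G = √D · reshape(g,K,M) · W_M. -/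
def charMatrix (K M : ℕ) (g : Fin (K * M) → ℂ) : Matrix (Fin K) (Fin M) ℂ :=
  (Real.sqrt (K * M) : ℂ) • (reshape K M g * W M)

/-- Phase-shifted characteristic matrix: Ḡ_{k,m} = G_{k,m} e^{-2πi km/D}. -/
def phaseShift (K M : ℕ) (G : Matrix (Fin K) (Fin M) ℂ) : Matrix (Fin K) (Fin M) ℂ := fun k m =>
  G k m * Complex.exp (-2 * Real.pi * Complex.I * (k.val : ℂ) * (m.val : ℂ) / ((K * M : ℕ) : ℂ))

/-- Index identification (m,k) ↦ k + K·m between Fin M × Fin K and Fin (K*M). -/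
def idx (K M : ℕ) : Fin M × Fin K ≃ Fin (K * M) :=
  finProdFinEquiv.trans (finCongr (Nat.mul_comm M K))

/-- The GFDM matrix (W_M^H ⊗ I_K)·diag(vec G)·(W_M ⊗ W_K^H) built from a characteristic matrix G. -/
def gfdmOfChar (K M : ℕ) (G : Matrix (Fin K) (Fin M) ℂ) :
    Matrix (Fin (K * M)) (Fin (K * M)) ℂ :=
  Matrix.reindex (idx K M) (idx K M)
    (((W M)ᴴ ⊗ₖ (1 : Matrix (Fin K) (Fin K) ℂ)) *
      Matrix.diagonal (fun p : Fin M × Fin K => G p.2 p.1) *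
      (W M ⊗ₖ (W K)ᴴ))

/-- The GFDM matrix defined directly by its columns: the (k+mK)-th column has n-th entry
    g_{⟨n-mK⟩_D} e^{2πi kn/K}. -/
def gfdmMatrix (K M : ℕ) (g : Fin (K * M) → ℂ) : Matrix (Fin (K * M)) (Fin (K * M)) ℂ :=
  fun n c =>
    g ⟨(n.val + K * M - (c.val / K) * K) % (K * M), by
        have h := n.isLt
        rcases Nat.eq_zero_or_pos (K * M) with h0 | h0
        · omega
        · exact Nat.mod_lt _ h0⟩ *
      Complex.exp (2 * Real.pi * Complex.I * ((c.val % K : ℕ) : ℂ) * (n.val : ℂ) / (K : ℂ))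

/-- The permutation matrix Π with Π_{kM+m, nK+l} = δ_{kl} δ_{mn}. -/
def permPi (K M : ℕ) : Matrix (Fin (K * M)) (Fin (K * M)) ℂ := fun i j =>
  if i.val / M = j.val % K ∧ i.val % M = j.val / K then 1 else 0

/-- The index k + m·K as an element of Fin (K*M). -/
def vecIdx {K M : ℕ} (k : Fin K) (m : Fin M) : Fin (K * M) :=
  ⟨k.val + m.val * K, by
    have hm := m.isLt
    calc k.val + m.val * K < K + m.val * K := by omega
      _ = (m.val + 1) * K := by ring
      _ ≤ M * K := Nat.mul_le_mul_right K hm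
      _ = K * M := Nat.mul_comm M K⟩

/-- The index k·M + m as an element of Fin (K*M). -/
def rowIdx {K M : ℕ} (k : Fin K) (m : Fin M) : Fin (K * M) :=
  ⟨k.val * M + m.val, by
    have hk := k.isLt
    calc k.val * M + m.val < k.val * M + M := by omega
      _ = (k.val + 1) * M := by ring
      _ ≤ K * M := Nat.mul_le_mul_right M hk⟩

end GFDM

/-! The matrix is a product of unitary factors: the DFT matrices are unitary by the orthogonality
of the `p`-th roots of unity, `Π` is a permutation matrix, Kronecker products and reindexings of
unitary matrices are unitary, and the diagonal factor has unimodular entries. -/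

namespace Matrix

variable {m n α : Type*} [Fintype m] [DecidableEq m] [Fintype n] [DecidableEq n]
  [CommRing α] [StarRing α]

theorem kronecker_mem_unitaryGroup {A : Matrix m m α} {B : Matrix n n α}
    (hA : A ∈ unitaryGroup m α) (hB : B ∈ unitaryGroup n α) :
    A ⊗ₖ B ∈ unitaryGroup (m × n) α := by
  rw [mem_unitaryGroup_iff', star_eq_conjTranspose] at hA hB ⊢
  rw [conjTranspose_kronecker, ← mul_kronecker_mul, hA, hB, one_kronecker_one]

theorem diagonal_mem_unitaryGroup {d : n → α} (hd : ∀ i, d i ∈ unitary α) :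
    diagonal d ∈ unitaryGroup n α := by
  rw [mem_unitaryGroup_iff', star_eq_conjTranspose, diagonal_conjTranspose, diagonal_mul_diagonal,
    ← diagonal_one]
  exact congrArg diagonal (funext fun i => Unitary.star_mul_self_of_mem (hd i))

theorem reindex_mem_unitaryGroup (e : m ≃ n) {A : Matrix m m α}
    (hA : A ∈ unitaryGroup m α) : reindex e e A ∈ unitaryGroup n α := by
  rw [mem_unitaryGroup_iff', star_eq_conjTranspose] at hA ⊢
  rw [conjTranspose_reindex, reindex_apply, reindex_apply, submatrix_mul_equiv, hA,
    submatrix_one_equiv]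

theorem permMatrix_mem_unitaryGroup (σ : Equiv.Perm n) :
    σ.permMatrix α ∈ unitaryGroup n α := by
  rw [mem_unitaryGroup_iff', star_eq_conjTranspose, conjTranspose_permMatrix, ← permMatrix_mul,
    mul_inv_cancel, permMatrix_one]

end Matrix

namespace Complex

theorem exp_ofReal_mul_I_mem_unitary (t : ℝ) : exp (t * I) ∈ unitary ℂ := by
  rw [Unitary.mem_iff_star_mul_self, star_def, ← exp_conj, ← exp_add]
  simp

theorem sum_fin_exp_two_pi_I_mul (p : ℕ) [NeZero p] (j : ℤ) :
    ∑ m : Fin p, exp (2 * Real.pi * I * j * m / p) = if (p : ℤ) ∣ j then (p : ℂ) else 0 := by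
  have hζ := isPrimitiveRoot_exp p (NeZero.ne p)
  set ζ := exp (2 * Real.pi * I / p)
  have hpow (m : ℕ) : exp (2 * Real.pi * I * j * m / p) = (ζ ^ j) ^ m := by
    rw [← zpow_natCast, ← _root_.zpow_mul, ← exp_int_mul]
    push_cast
    ring_nf
  simp_rw [hpow]
  rw [Fin.sum_univ_eq_sum_range (fun m => (ζ ^ j) ^ m)]
  split_ifs with h
  · simp [(hζ.zpow_eq_one_iff_dvd j).2 h]
  · rw [geom_sum_eq (mt (hζ.zpow_eq_one_iff_dvd j).1 h), ← zpow_natCast,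
      ← _root_.zpow_mul, mul_comm, _root_.zpow_mul, zpow_natCast, hζ.pow_eq_one, _root_.one_zpow,
      sub_self, zero_div]

end Complex

theorem Fin.dvd_val_sub_val_iff {p : ℕ} (a b : Fin p) : (p : ℤ) ∣ (a : ℤ) - b ↔ a = b := by
  rw [← Int.modEq_iff_dvd, Int.natCast_modEq_iff, Nat.ModEq, Nat.mod_eq_of_lt a.isLt,
    Nat.mod_eq_of_lt b.isLt, eq_comm, Fin.val_inj]

namespace GFDM

theorem W_mem_unitaryGroup (p : ℕ) : W p ∈ unitaryGroup (Fin p) ℂ := by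
  rw [mem_unitaryGroup_iff']
  ext a b
  have : NeZero p := ⟨a.pos.ne'⟩
  have hp : (p : ℂ) ≠ 0 := NeZero.ne _
  have hentry (m : Fin p) : star (W p) a m * W p m b =
      exp (2 * Real.pi * I * ((a : ℤ) - b : ℤ) * m / p) / p := by
    have hsqrt : ((Real.sqrt p : ℝ) : ℂ) * (Real.sqrt p : ℝ) = p := by
      rw [← ofReal_mul, Real.mul_self_sqrt (Nat.cast_nonneg p), ofReal_natCast]
    rw [star_apply, W, W, star_div₀, star_def, ← exp_conj, conj_ofReal, div_mul_div_comm,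
      ← exp_add, hsqrt]
    congr 2
    simp only [map_div₀, map_mul, map_neg, map_ofNat, conj_ofReal, conj_I, map_natCast]
    push_cast
    ring
  rw [mul_apply, Finset.sum_congr rfl fun m _ => hentry m, ← Finset.sum_div,
    sum_fin_exp_two_pi_I_mul]
  simp only [Fin.dvd_val_sub_val_iff, one_apply]
  split_ifs
  · exact div_self hp
  · exact zero_div _

-- `k * M + m ↦ k + m * K`
def commutationPerm (K M : ℕ) : Equiv.Perm (Fin (K * M)) :=
  finProdFinEquiv.symm.trans ((Equiv.prodComm (Fin K) (Fin M)).trans (idx K M))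

theorem permPi_eq_permMatrix (K M : ℕ) : permPi K M = (commutationPerm K M).permMatrix ℂ := by
  ext i j
  rw [permPi, Equiv.Perm.permMatrix, PEquiv.toMatrix_apply, Equiv.toPEquiv_apply]
  refine if_congr ?_ rfl rfl
  rw [Option.mem_some_iff, commutationPerm, Equiv.trans_apply, Equiv.trans_apply,
    ← Equiv.eq_symm_apply]
  simp [idx, Prod.ext_iff, Fin.ext_iff, and_comm, eq_comm]

theorem stmt16_general (K M : ℕ) :
    (W (K * M))ᴴ * permPi K M *
        Matrix.reindex (idx K M) (idx K M)
          (((1 : Matrix (Fin M) (Fin M) ℂ) ⊗ₖ W K) *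
            Matrix.diagonal (fun p : Fin M × Fin K =>
              if (p.1 : ℕ) < (M + 1) / 2 then 1
              else Complex.exp (-2 * Real.pi * Complex.I * (p.2.val : ℂ) / (K : ℂ))) *
            (W M ⊗ₖ (W K)ᴴ)) ∈ Matrix.unitaryGroup (Fin (K * M)) ℂ := by
  have hphase (p : Fin M × Fin K) : (if (p.1 : ℕ) < (M + 1) / 2 then 1
      else Complex.exp (-2 * Real.pi * Complex.I * (p.2.val : ℂ) / (K : ℂ))) ∈ unitary ℂ := by
    split_ifs
    · exact one_mem _
    · convert exp_ofReal_mul_I_mem_unitary (-2 * Real.pi * p.2 / K) using 2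
      push_cast
      ring
  have hWH (p : ℕ) : (W p)ᴴ ∈ unitaryGroup (Fin p) ℂ := Unitary.star_mem (W_mem_unitaryGroup p)
  rw [permPi_eq_permMatrix]
  exact mul_mem (mul_mem (hWH _) (permMatrix_mem_unitaryGroup _)) <| reindex_mem_unitaryGroup _ <|
    mul_mem (mul_mem (kronecker_mem_unitaryGroup (one_mem _) (W_mem_unitaryGroup K))
      (diagonal_mem_unitaryGroup hphase))
      (kronecker_mem_unitaryGroup (W_mem_unitaryGroup M) (hWH K))

theorem stmt16 (K M : ℕ) (hK : 0 < K) (hM : 0 < M) :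
    (W (K * M))ᴴ * permPi K M *
        Matrix.reindex (idx K M) (idx K M)
          (((1 : Matrix (Fin M) (Fin M) ℂ) ⊗ₖ W K) *
            Matrix.diagonal (fun p : Fin M × Fin K =>
              if (p.1 : ℕ) < (M + 1) / 2 then 1
              else Complex.exp (-2 * Real.pi * Complex.I * (p.2.val : ℂ) / (K : ℂ))) *
            (W M ⊗ₖ (W K)ᴴ)) ∈ Matrix.unitaryGroup (Fin (K * M)) ℂ :=
  stmt16_general K M

end GFDM
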